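/- arXiv:1211.4588 — 3 statements merged into one kernel-verified Lean document; each statement's English description precedes it below -/
import Mathlib

section
/- In a real normed vector space of dimension ≥ 2, given three nonnegative reals p, q, r satisfying the three weak triangle inequalities p ≤ q + r, q ≤ p + r, r ≤ p + q, there exist points a, b, c with ‖a - b‖ = p, ‖b - c‖ = q, and ‖a - c‖ = r. -/
/-!
Put `a = 0` and `c` at distance `r` from it. On the sphere of radius `p` about `0`, the distance
to `c` equals `|p - r|` at the point in the direction of `c` and `p + r` at the antipodal point.
In dimension at least two this sphere is connected, so by the intermediate value theorem the
distance also takes every value `q` in between, which is what the triangle inequalities say.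
-/

section

variable {V : Type*} [NormedAddCommGroup V] [NormedSpace ℝ V]

theorem exists_norm_eq_one_and_eq_norm_smul [Nontrivial V] (c : V) :
    ∃ u : V, ‖u‖ = 1 ∧ c = ‖c‖ • u := by
  rcases eq_or_ne c 0 with rfl | hc
  · obtain ⟨u, hu⟩ := exists_norm_eq V zero_le_one
    exact ⟨u, hu, by simp⟩
  · exact ⟨‖c‖⁻¹ • c, norm_smul_inv_norm hc, by simp [smul_smul, hc]⟩

theorem exists_norm_eq_and_norm_sub_eq (hdim : 1 < Module.rank ℝ V) (c : V) {p q : ℝ}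
    (hp : 0 ≤ p) (hq₁ : |p - ‖c‖| ≤ q) (hq₂ : q ≤ p + ‖c‖) :
    ∃ x : V, ‖x‖ = p ∧ ‖x - c‖ = q := by
  have : Nontrivial V := rank_pos_iff_nontrivial.mp (zero_lt_one.trans hdim)
  obtain ⟨u, hu, hcu⟩ := exists_norm_eq_one_and_eq_norm_smul c
  have hnorm_smul {s : ℝ} : ‖s • u‖ = |s| := by rw [norm_smul, hu, mul_one, Real.norm_eq_abs]
  have hnear : ‖p • u - c‖ = |p - ‖c‖| := by
    conv_lhs => rw [hcu, ← sub_smul, hnorm_smul]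
  have hfar : ‖-(p • u) - c‖ = p + ‖c‖ := by
    conv_lhs => rw [hcu, ← neg_smul, ← sub_smul, hnorm_smul]
    rw [abs_of_nonpos (by linarith [norm_nonneg c])]
    ring
  obtain ⟨x, hx, hxc⟩ := (isConnected_sphere hdim 0 hp).isPreconnected.intermediate_value
    (a := p • u) (b := -(p • u)) (by simp [hnorm_smul, abs_of_nonneg hp])
    (by simp [hnorm_smul, abs_of_nonneg hp]) (continuous_id.sub continuous_const).norm.continuousOn
    ⟨hnear ▸ hq₁, hfar ▸ hq₂⟩
  exact ⟨x, mem_sphere_zero_iff_norm.mp hx, hxc⟩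

end

theorem stmt_10_general (V : Type*) [NormedAddCommGroup V] [NormedSpace ℝ V]
    (hdim : 2 ≤ Module.rank ℝ V) (p q r : ℝ)
    (hp : 0 ≤ p) (hr : 0 ≤ r)
    (h1 : p ≤ q + r) (h2 : q ≤ p + r) (h3 : r ≤ p + q) :
    ∃ a b c : V, ‖a - b‖ = p ∧ ‖b - c‖ = q ∧ ‖a - c‖ = r := by
  have hdim' : 1 < Module.rank ℝ V := lt_of_lt_of_le (by norm_num) hdim
  have : Nontrivial V := rank_pos_iff_nontrivial.mp (zero_lt_one.trans hdim')
  obtain ⟨c, rfl⟩ := exists_norm_eq V hr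
  obtain ⟨x, hx, hxc⟩ := exists_norm_eq_and_norm_sub_eq hdim' c hp
    (abs_sub_le_iff.mpr ⟨by linarith, by linarith⟩) h2
  exact ⟨0, x, c, by rw [zero_sub, norm_neg, hx], hxc, by rw [zero_sub, norm_neg]⟩

theorem stmt_10 (V : Type*) [NormedAddCommGroup V] [NormedSpace ℝ V]
    (hdim : 2 ≤ Module.rank ℝ V) (p q r : ℝ)
    (hp : 0 ≤ p) (hq : 0 ≤ q) (hr : 0 ≤ r)
    (h1 : p ≤ q + r) (h2 : q ≤ p + r) (h3 : r ≤ p + q) :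
    ∃ a b c : V, ‖a - b‖ = p ∧ ‖b - c‖ = q ∧ ‖a - c‖ = r :=
  stmt_10_general V hdim p q r hp hr h1 h2 h3
end

section
/- In a real normed vector space, define ab ≤' cd to mean: for all m, if ‖c - m‖ = ‖d - m‖ then there exists s with ‖a - b‖ = ‖c - s‖ and ‖c - m‖ = ‖s - m‖. In a strictly convex space of dimension ≥ 2, ab ≤' cd holds if and only if ‖a - b‖ ≤ ‖c - d‖. -/
/-! Choosing `m` to be the midpoint of `c d` forces any transported point `s` to satisfy
`‖c - s‖ ≤ 2 ‖c - m‖ = ‖c - d‖`. Conversely, spheres are connected in dimension at least two,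
so on the sphere about `m` through `c` and `d` the distance to `c` takes every value between
`0` and `‖c - d‖`. -/

open Metric Set

theorem dist_le_of_dist_midpoint_eq {V : Type*} [NormedAddCommGroup V] [NormedSpace ℝ V]
    {c d s : V} (h : dist s (midpoint ℝ c d) = dist c (midpoint ℝ c d)) :
    dist c s ≤ dist c d :=
  calc dist c s ≤ dist c (midpoint ℝ c d) + dist s (midpoint ℝ c d) := dist_triangle_right ..
    _ = 2 * dist c (midpoint ℝ c d) := by rw [h, two_mul]
    _ = dist c d := by rw [dist_left_midpoint]; norm_num; ring

theorem exists_mem_sphere_dist_eq {V : Type*} [NormedAddCommGroup V] [NormedSpace ℝ V]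
    (hV : 1 < Module.rank ℝ V) {m c d : V} {r t : ℝ} (hc : c ∈ sphere m r)
    (hd : d ∈ sphere m r) (ht : t ∈ Icc 0 (dist c d)) :
    ∃ s ∈ sphere m r, dist c s = t := by
  have hr : 0 ≤ r := dist_nonneg.trans_eq (mem_sphere.mp hc)
  rw [← dist_self c] at ht
  exact (isConnected_sphere hV m hr).isPreconnected.intermediate_value hc hd
    (continuous_const.dist continuous_id).continuousOn ht

theorem stmt_11_general (V : Type*) [NormedAddCommGroup V] [NormedSpace ℝ V]
    (hdim : 2 ≤ Module.rank ℝ V) (a b c d : V) :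
    (∀ m : V, ‖c - m‖ = ‖d - m‖ →
        ∃ s : V, ‖a - b‖ = ‖c - s‖ ∧ ‖c - m‖ = ‖s - m‖) ↔
      ‖a - b‖ ≤ ‖c - d‖ := by
  simp only [← dist_eq_norm]
  constructor
  · intro h
    obtain ⟨s, hab, hs⟩ := h (midpoint ℝ c d) (dist_left_midpoint_eq_dist_right_midpoint c d)
    exact hab.trans_le (dist_le_of_dist_midpoint_eq hs.symm)
  · intro hle m hm
    obtain ⟨s, hs, hcs⟩ := exists_mem_sphere_dist_eq (Cardinal.one_lt_two.trans_le hdim)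
      (mem_sphere.mpr rfl) (mem_sphere.mpr hm.symm) ⟨dist_nonneg, hle⟩
    exact ⟨s, hcs.symm, (mem_sphere.mp hs).symm⟩

theorem stmt_11 (V : Type*) [NormedAddCommGroup V] [NormedSpace ℝ V]
    [StrictConvexSpace ℝ V] (hdim : 2 ≤ Module.rank ℝ V) (a b c d : V) :
    (∀ m : V, ‖c - m‖ = ‖d - m‖ →
        ∃ s : V, ‖a - b‖ = ‖c - s‖ ∧ ‖c - m‖ = ‖s - m‖) ↔
      ‖a - b‖ ≤ ‖c - d‖ :=
  stmt_11_general V hdim a b c d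
end

section
/- In a real normed vector space, the relation ab ≡₂ cd defined by 'there exists e with ‖a - e‖ = ‖c - d‖, ‖b - e‖ = ‖c - d‖, and for all x, y with ‖x - a‖ = ‖x - b‖ and ‖y - a‖ = ‖y - x‖ there exists z with ‖z - c‖ = ‖x - y‖ and ‖z - d‖ = ‖x - y‖' holds whenever ‖a - b‖ = 2·‖c - d‖, provided the space has dimension ≥ 2. -/
/-!
Take `e` to be the midpoint of `a` and `b`. For `x` equidistant from `a` and `b` and `y`
equidistant from `x` and `a`, the triangle inequality gives
`‖c - d‖ ≤ ‖x - a‖ ≤ 2 ‖x - y‖`. So it suffices that two points at distance `s` are both at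
distance `r` from some point whenever `s ≤ 2r`: on the sphere of radius `r` about `c`, which is
connected in dimension at least two, the distance to `d` ranges from `|s - r| ≤ r` to `s + r ≥ r`,
and the intermediate value theorem produces the point.
-/

section

variable {V : Type*} [NormedAddCommGroup V] [NormedSpace ℝ V]

lemma exists_norm_eq_sameRay [Nontrivial V] (u : V) {r : ℝ} (hr : 0 ≤ r) :
    ∃ v : V, ‖v‖ = r ∧ SameRay ℝ u v := by
  by_cases hu : u = 0
  · obtain ⟨v, hv⟩ := exists_norm_eq V hr
    exact ⟨v, hv, hu ▸ SameRay.zero_left v⟩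
  · have hu' : ‖u‖ ≠ 0 := norm_ne_zero_iff.mpr hu
    refine ⟨(r / ‖u‖) • u, ?_, SameRay.sameRay_nonneg_smul_right u (by positivity)⟩
    rw [norm_smul, Real.norm_of_nonneg (by positivity), div_mul_cancel₀ r hu']

lemma exists_norm_sub_eq_norm_sub_eq_of_norm_sub_le (hdim : 1 < Module.rank ℝ V) (c d : V)
    {r : ℝ} (hr : ‖c - d‖ ≤ 2 * r) : ∃ z : V, ‖z - c‖ = r ∧ ‖z - d‖ = r := by
  have : Nontrivial V := rank_pos_iff_nontrivial.mp (zero_lt_one.trans hdim)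
  have hr0 : 0 ≤ r := by linarith [norm_nonneg (c - d)]
  obtain ⟨v, hv, hray⟩ := exists_norm_eq_sameRay (d - c) hr0
  have hnear : ‖c + v - d‖ ≤ r := by
    rw [show c + v - d = -(d - c - v) by abel, norm_neg, hray.norm_sub, hv, norm_sub_rev]
    exact abs_sub_le_iff.mpr ⟨by linarith, by linarith [norm_nonneg (c - d)]⟩
  have hfar : r ≤ ‖c - v - d‖ := by
    rw [show c - v - d = -(d - c + v) by abel, norm_neg, hray.norm_add, hv]
    linarith [norm_nonneg (d - c)]
  have hsphere (w : V) (hw : ‖w‖ = r) : c + w ∈ Metric.sphere c r := by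
    simpa [dist_eq_norm] using hw
  obtain ⟨z, hz, hzd⟩ := (isConnected_sphere hdim c hr0).isPreconnected.intermediate_value
    (hsphere v hv) (hsphere (-v) (by rw [norm_neg, hv]))
    (continuous_id.sub continuous_const).norm.continuousOn
    (a := c + v) (b := c + -v) ⟨hnear, by rwa [← sub_eq_add_neg]⟩
  exact ⟨z, by simpa [dist_eq_norm] using hz, hzd⟩

end

theorem stmt_12 (V : Type*) [NormedAddCommGroup V] [NormedSpace ℝ V]
    (hdim : 2 ≤ Module.rank ℝ V) (a b c d : V)
    (h : ‖a - b‖ = 2 * ‖c - d‖) :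
    ∃ e : V, ‖a - e‖ = ‖c - d‖ ∧ ‖b - e‖ = ‖c - d‖ ∧
      ∀ x y : V, ‖x - a‖ = ‖x - b‖ → ‖y - a‖ = ‖y - x‖ →
        ∃ z : V, ‖z - c‖ = ‖x - y‖ ∧ ‖z - d‖ = ‖x - y‖ := by
  refine ⟨midpoint ℝ a b, ?_, ?_, fun x y hx hy => ?_⟩
  · rw [← dist_eq_norm, dist_left_midpoint, dist_eq_norm, h, Real.norm_two]
    ring
  · rw [← dist_eq_norm, dist_right_midpoint, dist_eq_norm, h, Real.norm_two]
    ring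
  have hcd : ‖c - d‖ ≤ ‖x - a‖ := by
    have := norm_sub_le_norm_sub_add_norm_sub a x b
    rw [norm_sub_rev a x] at this
    linarith
  have hxa : ‖x - a‖ ≤ 2 * ‖x - y‖ := by
    have := norm_sub_le_norm_sub_add_norm_sub x y a
    rw [hy, norm_sub_rev y x] at this
    linarith
  exact exists_norm_sub_eq_norm_sub_eq_of_norm_sub_le (lt_of_lt_of_le (by norm_num) hdim) c d
    (hcd.trans hxa)
end
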